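/- arXiv:2308.06895 — 5 statements merged into one kernel-verified Lean document; each statement's English description precedes it below -/
import Mathlib

section
/- For every p ∈ B: (i) exp_p(v) ∈ B for all v ∈ ℝ²; (ii) exp_p(log_p(x)) = x for all x ∈ B; and (iii) log_p(exp_p(v)) = v for all v ∈ ℝ². That is, the logarithmic and exponential maps at p are mutually inverse bijections between B and ℝ². -/
noncomputable section

open Real MeasureTheory Set
open scoped InnerProductSpace ENNReal NNReal Classical

/-- Points of the plane `ℝ²`, with the Euclidean inner product and norm. -/
abbrev Pt : Type := EuclideanSpace ℝ (Fin 2)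

namespace HypFL

/-- Inverse hyperbolic tangent. -/
def artanh (x : ℝ) : ℝ := (1 / 2) * Real.log ((1 + x) / (1 - x))

/-- The Poincaré disc `B = {x : k‖x‖² < 1}` of curvature `-k`. -/
def disc (k : ℝ) : Set Pt := {x : Pt | k * ‖x‖ ^ 2 < 1}

/-- Möbius addition on the Poincaré disc. -/
def mAdd (k : ℝ) (x y : Pt) : Pt :=
  (1 + 2 * k * ⟪x, y⟫_ℝ + k ^ 2 * ‖x‖ ^ 2 * ‖y‖ ^ 2)⁻¹ •
    ((1 + 2 * k * ⟪x, y⟫_ℝ + k * ‖y‖ ^ 2) • x + (1 - k * ‖x‖ ^ 2) • y)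

/-- Hyperbolic distance on the Poincaré disc. -/
def hdist (k : ℝ) (x y : Pt) : ℝ :=
  (2 / Real.sqrt k) * artanh (Real.sqrt k * ‖mAdd k (-x) y‖)

/-- Logarithmic map at `p`. -/
def logMap (k : ℝ) (p x : Pt) : Pt :=
  if x = p then 0
  else ((((1 - k * ‖p‖ ^ 2) / Real.sqrt k) * artanh (Real.sqrt k * ‖mAdd k (-p) x‖))
      / ‖mAdd k (-p) x‖) • mAdd k (-p) x

/-- Exponential map at `p`. -/
def expMap (k : ℝ) (p v : Pt) : Pt :=
  if v = 0 then p
  else mAdd k p ((Real.tanh (Real.sqrt k * ‖v‖ / (1 - k * ‖p‖ ^ 2)) / (Real.sqrt k * ‖v‖)) • v)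

/-- The geodesic segment `[x, y] = {exp_x (t • log_x y) : t ∈ [0,1]}`. -/
def geoSeg (k : ℝ) (x y : Pt) : Set Pt :=
  (fun t : ℝ => expMap k x (t • logMap k x y)) '' Set.Icc (0 : ℝ) 1

/-- A set is geodesically convex if it contains the geodesic segment between any two
of its points. -/
def GConvex (k : ℝ) (S : Set Pt) : Prop := ∀ x ∈ S, ∀ y ∈ S, geoSeg k x y ⊆ S

/-- The geodesic convex hull of `D`: the intersection of all geodesically convex subsets
of the Poincaré disc containing `D`. -/
def gconv (k : ℝ) (D : Set Pt) : Set Pt :=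
  ⋂₀ {S : Set Pt | S ⊆ disc k ∧ GConvex k S ∧ D ⊆ S}

/-- The set of extreme points of a (finite) set `D`: points `z ∈ D` with
`z ∉ gconv (D \ {z})`. -/
def extremePts (k : ℝ) (D : Set Pt) : Set Pt := {z ∈ D | z ∉ gconv k (D \ {z})}

/-- The `CCW` predicate of the Poincaré Graham scan. -/
def ccw (k : ℝ) (x t z : Pt) : ℝ :=
  (‖logMap k x t‖⁻¹ • logMap k x t) 0 * (‖logMap k x z‖⁻¹ • logMap k x z) 1 -
    (‖logMap k x t‖⁻¹ • logMap k x t) 1 * (‖logMap k x z‖⁻¹ • logMap k x z) 0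

/-- `s = 1/√k`. -/
def sOf (k : ℝ) : ℝ := 1 / Real.sqrt k

end HypFL

/-!
Both maps are a Möbius translation composed with a radial rescaling: with `c = 1 - k‖p‖²`,
`exp_p v = p ⊕ ρ v` and `log_p x = σ ((-p) ⊕ x)`, where `ρ` and `σ` keep directions and change
lengths by `r ↦ tanh (√k r / c) / √k` and by its inverse `r ↦ (c / √k) artanh (√k r)`.
Since `ρ` maps `ℝ²` into the disc, the theorem reduces to the facts that the disc is closed
under `⊕`, because `1 - k‖x ⊕ y‖² = (1 - k‖x‖²)(1 - k‖y‖²) / (1 + 2k⟪x, y⟫ + k²‖x‖²‖y‖²)`,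
and that `(-p) ⊕ (p ⊕ w) = w` there.
-/
namespace HypFL

lemma artanh_eq_real_artanh {x : ℝ} (hx : x ∈ Icc (-1) 1) : artanh x = Real.artanh x :=
  (Real.artanh_eq_half_log hx).symm

lemma tanh_pos {x : ℝ} (hx : 0 < x) : 0 < Real.tanh x := by
  rw [Real.tanh_eq_sinh_div_cosh]
  exact div_pos (Real.sinh_pos_iff.2 hx) (Real.cosh_pos x)

lemma artanh_tanh (x : ℝ) : artanh (Real.tanh x) = x := by
  have h := abs_lt.1 (Real.abs_tanh_lt_one x)
  rw [artanh_eq_real_artanh ⟨h.1.le, h.2.le⟩, Real.artanh_tanh]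

lemma tanh_artanh {x : ℝ} (hx : x ∈ Ioo (-1) 1) : Real.tanh (artanh x) = x := by
  rw [artanh_eq_real_artanh (Ioo_subset_Icc_self hx), Real.tanh_artanh hx]

section Radial

variable {E : Type*} [NormedAddCommGroup E] [NormedSpace ℝ E]

def radial (f : ℝ → ℝ) (v : E) : E := (f ‖v‖ / ‖v‖) • v

lemma radial_zero (f : ℝ → ℝ) : radial f (0 : E) = 0 := by
  simp [radial]

lemma norm_radial (f : ℝ → ℝ) {v : E} (hv : v ≠ 0) : ‖radial f v‖ = |f ‖v‖| := by
  have hnv : 0 < ‖v‖ := norm_pos_iff.2 hv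
  rw [radial, norm_smul, Real.norm_eq_abs, abs_div, abs_of_pos hnv, div_mul_cancel₀ _ hnv.ne']

lemma radial_ne_zero {f : ℝ → ℝ} {v : E} (hv : v ≠ 0) (hf : f ‖v‖ ≠ 0) : radial f v ≠ 0 := by
  rw [← norm_ne_zero_iff, norm_radial f hv]
  exact abs_ne_zero.2 hf

lemma radial_radial {f g : ℝ → ℝ} {v : E} (hv : v ≠ 0) (hf : 0 < f ‖v‖)
    (hgf : g (f ‖v‖) = ‖v‖) : radial g (radial f v) = v := by
  have hnv : 0 < ‖v‖ := norm_pos_iff.2 hv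
  rw [radial, norm_radial f hv, abs_of_pos hf, hgf, radial, smul_smul,
    div_mul_div_cancel₀ hf.ne', div_self hnv.ne', one_smul]

end Radial

section Radius

variable {k c r : ℝ}

def expRadius (k c r : ℝ) : ℝ := Real.tanh (√k * r / c) / √k

def logRadius (k c r : ℝ) : ℝ := c / √k * artanh (√k * r)

lemma logRadius_expRadius (hk : 0 < k) (hc : c ≠ 0) :
    logRadius k c (expRadius k c r) = r := by
  have hs : √k ≠ 0 := (Real.sqrt_pos.2 hk).ne'
  rw [logRadius, expRadius, mul_div_cancel₀ _ hs, artanh_tanh]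
  field_simp

lemma expRadius_logRadius (hk : 0 < k) (hc : c ≠ 0) (hr : k * r ^ 2 < 1) :
    expRadius k c (logRadius k c r) = r := by
  have hs : √k ≠ 0 := (Real.sqrt_pos.2 hk).ne'
  have hsr : √k * r ∈ Ioo (-1) 1 := by
    rw [mem_Ioo, ← abs_lt, ← sq_lt_one_iff_abs_lt_one, mul_pow, Real.sq_sqrt hk.le]
    exact hr
  rw [expRadius, logRadius, show √k * (c / √k * artanh (√k * r)) / c = artanh (√k * r) by
    field_simp, tanh_artanh hsr]
  field_simp

lemma expRadius_pos (hk : 0 < k) (hc : 0 < c) (hr : 0 < r) : 0 < expRadius k c r :=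
  div_pos (tanh_pos (by positivity)) (Real.sqrt_pos.2 hk)

lemma mul_expRadius_sq_lt_one (hk : 0 < k) : k * expRadius k c r ^ 2 < 1 := by
  rw [expRadius, div_pow, Real.sq_sqrt hk.le, mul_div_cancel₀ _ hk.ne']
  exact Real.tanh_sq_lt_one _

lemma logRadius_pos (hk : 0 < k) (hc : 0 < c) (hr : 0 < r) (hr' : k * r ^ 2 < 1) :
    0 < logRadius k c r := by
  have hs : 0 < √k := Real.sqrt_pos.2 hk
  have hsr : √k * r < 1 := by nlinarith [Real.sq_sqrt hk.le]
  rw [logRadius, artanh_eq_real_artanh ⟨by nlinarith, hsr.le⟩]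
  exact mul_pos (div_pos hc hs) (Real.artanh_pos ⟨mul_pos hs hr, hsr⟩)

lemma radial_expRadius_mem_disc (hk : 0 < k) {v : Pt} :
    radial (expRadius k c) v ∈ disc k := by
  rcases eq_or_ne v 0 with rfl | hv
  · simp [radial_zero, disc]
  · rw [disc, mem_ofPred_eq, norm_radial _ hv, sq_abs]
    exact mul_expRadius_sq_lt_one hk

end Radius

section Mobius

variable {k : ℝ}

lemma mAdd_zero (x : Pt) : mAdd k x 0 = x := by
  simp [mAdd]

lemma neg_mem_disc {p : Pt} (hp : p ∈ disc k) : -p ∈ disc k := by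
  rwa [disc, mem_ofPred_eq, norm_neg]

lemma mAdd_denom_pos (hk : 0 ≤ k) {x y : Pt} (hx : x ∈ disc k) (hy : y ∈ disc k) :
    0 < 1 + 2 * k * ⟪x, y⟫_ℝ + k ^ 2 * ‖x‖ ^ 2 * ‖y‖ ^ 2 := by
  have hxy : -(‖x‖ * ‖y‖) ≤ ⟪x, y⟫_ℝ := neg_le_of_abs_le (abs_real_inner_le_norm x y)
  have hx' : k * ‖x‖ ^ 2 < 1 := hx
  have hy' : k * ‖y‖ ^ 2 < 1 := hy
  nlinarith [mul_pos (sub_pos.2 hx') (sub_pos.2 hy'), mul_nonneg hk (sq_nonneg (‖x‖ - ‖y‖)),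
    mul_nonneg hk (neg_le_iff_add_nonneg.1 hxy)]

lemma norm_mAdd_sq (x y : Pt) :
    ‖mAdd k x y‖ ^ 2 =
      ((1 + 2 * k * ⟪x, y⟫_ℝ + k * ‖y‖ ^ 2) ^ 2 * ‖x‖ ^ 2
        + 2 * (1 + 2 * k * ⟪x, y⟫_ℝ + k * ‖y‖ ^ 2) * (1 - k * ‖x‖ ^ 2) * ⟪x, y⟫_ℝ
        + (1 - k * ‖x‖ ^ 2) ^ 2 * ‖y‖ ^ 2)
      / (1 + 2 * k * ⟪x, y⟫_ℝ + k ^ 2 * ‖x‖ ^ 2 * ‖y‖ ^ 2) ^ 2 := by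
  rw [← real_inner_self_eq_norm_sq (mAdd k x y), mAdd]
  simp only [real_inner_smul_left, real_inner_smul_right, inner_add_left, inner_add_right,
    real_inner_self_eq_norm_sq x, real_inner_self_eq_norm_sq y, real_inner_comm x y]
  generalize 1 + 2 * k * ⟪x, y⟫_ℝ + k ^ 2 * ‖x‖ ^ 2 * ‖y‖ ^ 2 = D
  ring

lemma one_sub_mul_norm_mAdd_sq (hk : 0 ≤ k) {x y : Pt} (hx : x ∈ disc k) (hy : y ∈ disc k) :
    1 - k * ‖mAdd k x y‖ ^ 2 =
      (1 - k * ‖x‖ ^ 2) * (1 - k * ‖y‖ ^ 2)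
        / (1 + 2 * k * ⟪x, y⟫_ℝ + k ^ 2 * ‖x‖ ^ 2 * ‖y‖ ^ 2) := by
  have hD := (mAdd_denom_pos hk hx hy).ne'
  rw [norm_mAdd_sq]
  generalize hD_def : 1 + 2 * k * ⟪x, y⟫_ℝ + k ^ 2 * ‖x‖ ^ 2 * ‖y‖ ^ 2 = D at hD ⊢
  field_simp
  rw [← hD_def]
  ring

lemma mAdd_mem_disc (hk : 0 ≤ k) {x y : Pt} (hx : x ∈ disc k) (hy : y ∈ disc k) :
    mAdd k x y ∈ disc k := by
  have hx' : k * ‖x‖ ^ 2 < 1 := hx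
  have hy' : k * ‖y‖ ^ 2 < 1 := hy
  have h := one_sub_mul_norm_mAdd_sq hk hx hy
  have hpos := div_pos (mul_pos (sub_pos.2 hx') (sub_pos.2 hy')) (mAdd_denom_pos hk hx hy)
  change k * ‖mAdd k x y‖ ^ 2 < 1
  linarith

lemma inner_neg_mAdd (p w : Pt) :
    ⟪-p, mAdd k p w⟫_ℝ =
      -((1 + 2 * k * ⟪p, w⟫_ℝ + k * ‖w‖ ^ 2) * ‖p‖ ^ 2 + (1 - k * ‖p‖ ^ 2) * ⟪p, w⟫_ℝ)
        / (1 + 2 * k * ⟪p, w⟫_ℝ + k ^ 2 * ‖p‖ ^ 2 * ‖w‖ ^ 2) := by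
  rw [mAdd, inner_neg_left, real_inner_smul_right, inner_add_right, real_inner_smul_right,
    real_inner_smul_right, real_inner_self_eq_norm_sq]
  ring

lemma neg_mAdd_cancel_left (hk : 0 ≤ k) {p w : Pt} (hp : p ∈ disc k) (hw : w ∈ disc k) :
    mAdd k (-p) (mAdd k p w) = w := by
  have hD := (mAdd_denom_pos hk hp hw).ne'
  have hE := (mAdd_denom_pos hk (neg_mem_disc hp) (mAdd_mem_disc hk hp hw)).ne'
  rw [inner_neg_mAdd, norm_mAdd_sq, norm_neg] at hE
  rw [mAdd, inner_neg_mAdd, norm_mAdd_sq, norm_neg, inv_smul_eq_iff₀ hE, mAdd]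
  -- `field_simp` only recognises the denominator as nonzero once it is an atom
  generalize hD_def : 1 + 2 * k * ⟪p, w⟫_ℝ + k ^ 2 * ‖p‖ ^ 2 * ‖w‖ ^ 2 = D at hD ⊢
  match_scalars <;>
  · field_simp
    rw [← hD_def]
    ring

lemma mAdd_neg_cancel_left (hk : 0 ≤ k) {p x : Pt} (hp : p ∈ disc k) (hx : x ∈ disc k) :
    mAdd k p (mAdd k (-p) x) = x := by
  simpa using neg_mAdd_cancel_left hk (neg_mem_disc hp) hx

lemma neg_mAdd_eq_zero_iff (hk : 0 ≤ k) {p x : Pt} (hp : p ∈ disc k) (hx : x ∈ disc k) :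
    mAdd k (-p) x = 0 ↔ x = p := by
  constructor
  · intro h
    rw [← mAdd_neg_cancel_left hk hp hx, h, mAdd_zero]
  · rintro rfl
    simpa [mAdd_zero] using neg_mAdd_cancel_left hk hp (w := 0) (by simp [disc])

end Mobius

section ExpLog

variable {k : ℝ} {p : Pt}

lemma expMap_of_ne_zero {v : Pt} (hv : v ≠ 0) :
    expMap k p v = mAdd k p (radial (expRadius k (1 - k * ‖p‖ ^ 2)) v) := by
  rw [expMap, if_neg hv, radial, expRadius, div_div]

lemma logMap_of_ne {x : Pt} (hx : x ≠ p) :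
    logMap k p x = radial (logRadius k (1 - k * ‖p‖ ^ 2)) (mAdd k (-p) x) := by
  rw [logMap, if_neg hx]
  rfl

lemma expMap_mem_disc (hk : 0 < k) (hp : p ∈ disc k) (v : Pt) : expMap k p v ∈ disc k := by
  rcases eq_or_ne v 0 with rfl | hv
  · rwa [expMap, if_pos rfl]
  · rw [expMap_of_ne_zero hv]
    exact mAdd_mem_disc hk.le hp (radial_expRadius_mem_disc hk)

lemma expMap_logMap (hk : 0 < k) (hp : p ∈ disc k) {x : Pt} (hx : x ∈ disc k) :
    expMap k p (logMap k p x) = x := by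
  rcases eq_or_ne x p with rfl | hxp
  · rw [logMap, if_pos rfl, expMap, if_pos rfl]
  have hc : 0 < 1 - k * ‖p‖ ^ 2 := sub_pos.2 hp
  set u := mAdd k (-p) x
  have hu : k * ‖u‖ ^ 2 < 1 := mAdd_mem_disc hk.le (neg_mem_disc hp) hx
  have hu0 : u ≠ 0 := fun h => hxp ((neg_mAdd_eq_zero_iff hk.le hp hx).1 h)
  have hlog_pos := logRadius_pos hk hc (norm_pos_iff.2 hu0) hu
  rw [logMap_of_ne hxp, expMap_of_ne_zero (radial_ne_zero hu0 hlog_pos.ne'),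
    radial_radial hu0 hlog_pos (expRadius_logRadius hk hc.ne' hu)]
  exact mAdd_neg_cancel_left hk.le hp hx

lemma logMap_expMap (hk : 0 < k) (hp : p ∈ disc k) (v : Pt) : logMap k p (expMap k p v) = v := by
  rcases eq_or_ne v 0 with rfl | hv
  · rw [expMap, if_pos rfl, logMap, if_pos rfl]
  have hc : 0 < 1 - k * ‖p‖ ^ 2 := sub_pos.2 hp
  set w := radial (expRadius k (1 - k * ‖p‖ ^ 2)) v
  have hw : w ∈ disc k := radial_expRadius_mem_disc hk
  have hexp_pos := expRadius_pos hk hc (norm_pos_iff.2 hv)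
  have hw0 : w ≠ 0 := radial_ne_zero hv hexp_pos.ne'
  have hne : mAdd k p w ≠ p := by
    intro h
    apply hw0
    rw [← neg_mAdd_cancel_left hk.le hp hw, h]
    exact (neg_mAdd_eq_zero_iff hk.le hp hp).2 rfl
  rw [expMap_of_ne_zero hv, logMap_of_ne hne, neg_mAdd_cancel_left hk.le hp hw]
  exact radial_radial hv hexp_pos (logRadius_expRadius hk hc.ne')

end ExpLog

/-- For every `p ∈ B`: (i) `exp_p v ∈ B` for all `v`;
(ii) `exp_p (log_p x) = x` for all `x ∈ B`; (iii) `log_p (exp_p v) = v` for all `v`.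
The logarithmic and exponential maps at `p` are mutually inverse bijections between
`B` and `ℝ²`. -/
theorem log_exp_inverse (k : ℝ) (hk : 0 < k) (p : Pt) (hp : p ∈ disc k) :
    (∀ v : Pt, expMap k p v ∈ disc k) ∧
    (∀ x ∈ disc k, expMap k p (logMap k p x) = x) ∧
    (∀ v : Pt, logMap k p (expMap k p v) = v) :=
  ⟨expMap_mem_disc hk hp, fun _ => expMap_logMap hk hp, logMap_expMap hk hp⟩

end HypFL
end
end

section
/- Let b ∈ B with b ≠ 0. Then for every x ∈ B with ‖x‖ ≤ ‖b‖ and x ≠ b, one has ⟨log_b(x), log_b(0)⟩ > 0. (Equivalently: all points of the closed Euclidean disc of radius ‖b‖, including the origin, lie strictly on the same side of the geodesic through b whose tangent direction at b is orthogonal to log_b(0); this is the 'same side of l_b' lemma underlying the Poincaré Graham scan.) -/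
noncomputable section

open Real MeasureTheory Set
open scoped InnerProductSpace ENNReal NNReal Classical

namespace HypFL

lemma artanh_pos {t : ℝ} (h0 : 0 < t) (h1 : t < 1) : 0 < artanh t := by
  unfold artanh
  have h2 : (1:ℝ) < (1+t)/(1-t) := (one_lt_div (by linarith)).2 (by linarith)
  have := Real.log_pos h2
  linarith

/-- For `b ∈ B`, `b ≠ 0`, and every `x ∈ B` with `‖x‖ ≤ ‖b‖` and `x ≠ b`,
one has `⟪log_b x, log_b 0⟫ > 0`: all points of the closed Euclidean disc of radius `‖b‖`
lie strictly on the same side of the geodesic through `b` with tangent direction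
orthogonal to `log_b 0`. -/
theorem same_side_of_geodesic (k : ℝ) (hk : 0 < k) (b : Pt) (hb : b ∈ disc k) (hb0 : b ≠ 0)
    (x : Pt) (hx : x ∈ disc k) (hxb : ‖x‖ ≤ ‖b‖) (hne : x ≠ b) :
    0 < ⟪logMap k b x, logMap k b 0⟫_ℝ := by
  have hr0 : 0 < ‖b‖ := norm_pos_iff.2 hb0
  have hu0 : 0 ≤ ‖x‖ := norm_nonneg x
  have hkr : k * ‖b‖^2 < 1 := hb
  have hku : k * ‖x‖^2 < 1 := hx
  have hsk : 0 < Real.sqrt k := Real.sqrt_pos.2 hk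
  have hsk2 : Real.sqrt k ^ 2 = k := Real.sq_sqrt hk.le
  set r := ‖b‖ with hr
  set u := ‖x‖ with hu
  set t := ⟪b, x⟫_ℝ with ht
  have hcs : t ≤ r * u := real_inner_le_norm b x
  have hpos1 : (0:ℝ) < 1 + k*r^2 := by positivity
  have haux : 0 ≤ k*r*(r-u) := mul_nonneg (mul_nonneg hk.le hr0.le) (sub_nonneg.2 hxb)
  have hkru : k*r*u < 1 := by nlinarith
  -- key strict inequality
  have hN : t * (1 + k*r^2) - r^2 * (1 + k*u^2) < 0 := by
    rcases lt_or_eq_of_le hxb with h | h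
    · have h2 : 0 < r*(r-u)*(1-k*r*u) :=
        mul_pos (mul_pos hr0 (sub_pos.2 h)) (by linarith)
      have h3 : t*(1+k*r^2) ≤ r*u*(1+k*r^2) :=
        mul_le_mul_of_nonneg_right hcs hpos1.le
      nlinarith [h2, h3]
    · have ht' : t < r * u := by
        rcases lt_or_eq_of_le hcs with h2 | h2
        · exact h2
        · exfalso
          apply hne
          have h2' : ⟪b, x⟫_ℝ = ‖b‖ * ‖x‖ := by rw [← ht, ← hr, ← hu]; exact h2
          have h3 := inner_eq_norm_mul_iff_real.1 h2'
          rw [show ‖x‖ = ‖b‖ from h] at h3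
          exact smul_right_injective Pt hr0.ne' h3.symm
      have h4 : t*(1+k*r^2) < r*u*(1+k*r^2) := mul_lt_mul_of_pos_right ht' hpos1
      rw [h] at h4 ⊢
      nlinarith [h4]
  set A : ℝ := 1 - 2*k*t + k*u^2 with hA
  set C : ℝ := 1 - k*r^2 with hC
  set D : ℝ := 1 - 2*k*t + k^2*r^2*u^2 with hD
  have hDpos : 0 < D := by
    nlinarith [sq_nonneg (1 - k*r*u), mul_nonneg hk.le (sub_nonneg.2 hcs)]
  have hCpos : 0 < C := by rw [hC]; linarith
  set m : Pt := mAdd k (-b) x with hm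
  have hm_eq : m = D⁻¹ • (A • (-b) + C • x) := by
    rw [hm]
    unfold mAdd
    rw [inner_neg_left, norm_neg]
    rw [← hr, ← hu, ← ht]
    have e1 : 1 + 2 * k * -t + k ^ 2 * r ^ 2 * u ^ 2 = D := by rw [hD]; ring
    have e2 : 1 + 2 * k * -t + k * u ^ 2 = A := by rw [hA]; ring
    have e3 : 1 - k * r ^ 2 = C := by rw [hC]
    rw [e1, e2, e3]
  have e1 : ⟪x, b⟫_ℝ = t := (real_inner_comm b x).trans ht.symm
  have e2 : ⟪b, x⟫_ℝ = t := ht.symm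
  have e3 : ‖b‖ = r := hr.symm
  have e4 : ‖x‖ = u := hu.symm
  have hmb : ⟪m, b⟫_ℝ = D⁻¹ * (t * (1 + k*r^2) - r^2 * (1 + k*u^2)) := by
    rw [hm_eq]
    simp only [inner_add_left, inner_add_right, real_inner_smul_left, real_inner_smul_right,
      inner_neg_left, inner_neg_right, real_inner_self_eq_norm_sq, e1, e2, e3, e4]
    rw [hA, hC]; ring
  have hmb_neg : ⟪m, b⟫_ℝ < 0 := by
    rw [hmb]
    exact mul_neg_of_pos_of_neg (inv_pos.2 hDpos) hN
  have hm0 : m ≠ 0 := by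
    intro h
    rw [h, inner_zero_left] at hmb_neg
    exact lt_irrefl 0 hmb_neg
  have hmnorm : 0 < ‖m‖ := norm_pos_iff.2 hm0
  have hmm : ‖m‖^2 = D⁻¹^2 * (A^2*r^2 - 2*A*C*t + C^2*u^2) := by
    rw [← real_inner_self_eq_norm_sq]
    rw [hm_eq]
    simp only [inner_add_left, inner_add_right, real_inner_smul_left, real_inner_smul_right,
      inner_neg_left, inner_neg_right]
    simp only [real_inner_self_eq_norm_sq, e1, e2, e3, e4]
    ring
  have hkm : k * ‖m‖^2 < 1 := by
    have key : k * (A^2*r^2 - 2*A*C*t + C^2*u^2) - D^2 = -(D * (1-k*r^2) * (1-k*u^2)) := by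
      rw [hA, hC, hD]; ring
    have h1 : D⁻¹^2 * D^2 = 1 := by
      field_simp
    have h2 : k*‖m‖^2 - 1 = D⁻¹^2 * (k*(A^2*r^2 - 2*A*C*t + C^2*u^2) - D^2) := by
      rw [hmm]; linear_combination h1
    rw [key] at h2
    have h3 : 0 < D⁻¹^2 * (D * (1-k*r^2) * (1-k*u^2)) :=
      mul_pos (pow_pos (inv_pos.2 hDpos) 2)
        (mul_pos (mul_pos hDpos (by linarith)) (by linarith))
    linarith [h2, h3]
  have hskm : Real.sqrt k * ‖m‖ < 1 := by
    have h5 : (Real.sqrt k * ‖m‖)^2 < 1^2 := by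
      rw [mul_pow, hsk2, one_pow]; exact hkm
    exact lt_of_pow_lt_pow_left₀ 2 zero_le_one h5
  have hskm0 : 0 < Real.sqrt k * ‖m‖ := mul_pos hsk hmnorm
  have hskr : Real.sqrt k * r < 1 := by
    have h5 : (Real.sqrt k * r)^2 < 1^2 := by
      rw [mul_pow, hsk2, one_pow]; exact hkr
    exact lt_of_pow_lt_pow_left₀ 2 zero_le_one h5
  have hskr0 : 0 < Real.sqrt k * r := mul_pos hsk hr0
  have hlog_x : logMap k b x = ((((1 - k * r ^ 2) / Real.sqrt k) * artanh (Real.sqrt k * ‖m‖))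
      / ‖m‖) • m := by
    rw [logMap, if_neg hne]
  have hmadd0 : mAdd k (-b) 0 = -b := by
    unfold mAdd
    simp
  have hlog_0 : logMap k b 0 = ((((1 - k * r ^ 2) / Real.sqrt k) * artanh (Real.sqrt k * r))
      / r) • (-b) := by
    rw [logMap, if_neg (Ne.symm hb0), hmadd0, norm_neg]
  rw [hlog_x, hlog_0, real_inner_smul_left, real_inner_smul_right, inner_neg_right]
  have hc1 : 0 < (((1 - k * r ^ 2) / Real.sqrt k) * artanh (Real.sqrt k * ‖m‖)) / ‖m‖ := by
    apply div_pos _ hmnorm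
    exact mul_pos (div_pos (by rw [← hC] at *; linarith) hsk) (artanh_pos hskm0 hskm)
  have hc2 : 0 < (((1 - k * r ^ 2) / Real.sqrt k) * artanh (Real.sqrt k * r)) / r := by
    apply div_pos _ hr0
    exact mul_pos (div_pos (by rw [← hC] at *; linarith) hsk) (artanh_pos hskr0 hskr)
  have hmb' : 0 < -⟪m, b⟫_ℝ := by linarith
  calc (0:ℝ) < _ := mul_pos hc1 (mul_pos hc2 hmb')
    _ = _ := by ring

end HypFL
end
end

section
/- For every ε > 0 and every pair of points x, y in the closed disc {x ∈ ℝ² : ‖x‖ ≤ R} that lie in the same quantization bin B(n₁, n₂), one has d(x, y) ≤ ε; consequently the scheme PQ_ε is an ε-Poincaré quantization scheme, and moreover d(x, PQ_ε(x)) ≤ ε for every such x. -/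
noncomputable section

open Real MeasureTheory Set
open scoped InnerProductSpace ENNReal NNReal Classical

namespace HypFL

/-- The hyperbolic area measure on the Poincaré disc: density `4/(1-k‖x‖²)²` with respect
to the two-dimensional Lebesgue measure. -/
def hypArea (k : ℝ) : Measure Pt :=
  volume.withDensity fun x : Pt => ENNReal.ofReal (4 / (1 - k * ‖x‖ ^ 2) ^ 2)

/-- The hyperbolic-uniform probability distribution on the closed Euclidean disc of
radius `R`: the hyperbolic area measure restricted to the disc and normalized. -/
def nu (k R : ℝ) : Measure Pt :=
  (hypArea k (Metric.closedBall 0 R))⁻¹ • (hypArea k).restrict (Metric.closedBall 0 R)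

end HypFL

namespace HypFL

/-- The polar angle of a nonzero point of `ℝ²`, normalized to lie in `(0, 2π]`. -/
def polarAngle (x : Pt) : ℝ :=
  if 0 < Complex.arg ((x 0 : ℂ) + (x 1 : ℂ) * Complex.I) then
    Complex.arg ((x 0 : ℂ) + (x 1 : ℂ) * Complex.I)
  else Complex.arg ((x 0 : ℂ) + (x 1 : ℂ) * Complex.I) + 2 * π

/-- The point of `ℝ²` with Euclidean radius `r` and polar angle `θ`. -/
def ptPolar (r θ : ℝ) : Pt := WithLp.toLp 2 ![r * Real.cos θ, r * Real.sin θ]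

/-- The hyperbolic radius `R_H = s ln((s+R)/(s−R))` corresponding to Euclidean radius `R`. -/
def RH (k R : ℝ) : ℝ := sOf k * Real.log ((sOf k + R) / (sOf k - R))

/-- Number of angular quantization bins: `N_Θ = ⌈4πs sinh(R_H/s)/ε⌉`. -/
def NTheta (k R ε : ℝ) : ℕ := ⌈4 * π * sOf k * Real.sinh (RH k R / sOf k) / ε⌉₊

/-- Number of radial quantization bins: `N_R = ⌈2R_H/ε⌉`. -/
def NRad (k R ε : ℝ) : ℕ := ⌈2 * RH k R / ε⌉₊

/-- The quantization bin `B(n₁, n₂)`: points whose polar angle lies in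
`((n₁−1)·2π/N_Θ, n₁·2π/N_Θ]` and whose hyperbolic distance to the origin lies in
`((n₂−1)·R_H/N_R, n₂·R_H/N_R]`. -/
def qbin (k R ε : ℝ) (n₁ n₂ : ℕ) : Set Pt :=
  {x : Pt |
    polarAngle x ∈ Set.Ioc (((n₁ : ℝ) - 1) * (2 * π / NTheta k R ε))
      ((n₁ : ℝ) * (2 * π / NTheta k R ε)) ∧
    hdist k 0 x ∈ Set.Ioc (((n₂ : ℝ) - 1) * (RH k R / NRad k R ε))
      ((n₂ : ℝ) * (RH k R / NRad k R ε))}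

/-- The Euclidean radius corresponding to hyperbolic radius `h`:
`s(e^{h/s} − 1)/(e^{h/s} + 1)`. -/
def eucOfHyp (k h : ℝ) : ℝ :=
  sOf k * (Real.exp (h / sOf k) - 1) / (Real.exp (h / sOf k) + 1)

/-- The `ε`-Poincaré quantization map `PQ_ε`: each point of the bin `B(n₁, n₂)` is sent to
the bin center, namely the point with polar angle `(n₁ − 1/2)·2π/N_Θ` and hyperbolic
distance `(n₂ − 1/2)·R_H/N_R` from the origin; the origin is fixed. -/
def PQ (k R ε : ℝ) (x : Pt) : Pt :=
  if x = 0 then 0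
  else
    ptPolar
      (eucOfHyp k
        (((⌈hdist k 0 x / (RH k R / NRad k R ε)⌉₊ : ℝ) - 1 / 2) * (RH k R / NRad k R ε)))
      (((⌈polarAngle x / (2 * π / NTheta k R ε)⌉₊ : ℝ) - 1 / 2) * (2 * π / NTheta k R ε))

end HypFL

/-!
In geodesic polar coordinates `(r, θ)` about the origin, the hyperbolic law of cosines reads
`cosh(√k d) = cosh(√k (r₁ - r₂)) + sinh(√k r₁) sinh(√k r₂) (1 - cos(θ₁ - θ₂))`.
With `1 - cos θ ≤ θ²/2`, `1 + q²/2 ≤ cosh q` and `cosh p + cosh q ≤ 1 + cosh (p + q)`, this gives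
`d ≤ |r₁ - r₂| + s sinh(R_H/s) |θ₁ - θ₂|` for radii in `[0, R_H]`.
`N_R` and `N_Θ` are chosen so that both terms are at most `ε/2` as soon as the radii differ by at
most one radial step and the angles by at most one angular step. This holds for two points of one
bin, and also for a point and the centre of its bin.
-/

namespace HypFL

lemma cosh_two_mul_artanh {t : ℝ} (ht : t ∈ Ioo (-1) 1) :
    cosh (2 * Real.artanh t) = (1 + t ^ 2) / (1 - t ^ 2) := by
  have h : 0 < 1 - t ^ 2 := by nlinarith [ht.1, ht.2]
  rw [cosh_two_mul, Real.cosh_artanh ht, Real.sinh_artanh ht, div_pow, div_pow,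
    Real.sq_sqrt h.le]
  field_simp

lemma cosh_two_mul_eq_tanh (b : ℝ) : cosh (2 * b) = (1 + tanh b ^ 2) / (1 - tanh b ^ 2) := by
  have hc := cosh_pos b
  rw [tanh_eq_sinh_div_cosh, cosh_two_mul]
  field_simp
  linear_combination cosh_sq b

lemma sinh_two_mul_eq_tanh (b : ℝ) : sinh (2 * b) = 2 * tanh b / (1 - tanh b ^ 2) := by
  have hc := cosh_pos b
  rw [tanh_eq_sinh_div_cosh, sinh_two_mul]
  field_simp
  linear_combination sinh b * cosh_sq b

lemma one_add_sq_div_two_le_cosh (x : ℝ) : 1 + x ^ 2 / 2 ≤ cosh x := by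
  have h : |x / 2| ^ 2 ≤ sinh (x / 2) ^ 2 := by
    rw [← sq_abs (sinh _), abs_sinh]
    exact pow_le_pow_left₀ (abs_nonneg _) (self_le_sinh_iff.2 (abs_nonneg _)) 2
  rw [sq_abs] at h
  have hx : cosh x = cosh (x / 2) ^ 2 + sinh (x / 2) ^ 2 := by rw [← cosh_two_mul]; ring_nf
  nlinarith [cosh_sq (x / 2)]

lemma cosh_add_cosh_le {p q : ℝ} (hp : 0 ≤ p) (hq : 0 ≤ q) :
    cosh p + cosh q ≤ 1 + cosh (p + q) := by
  rw [cosh_add]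
  nlinarith [one_le_cosh p, one_le_cosh q, sinh_nonneg_iff.2 hp, sinh_nonneg_iff.2 hq]

lemma cosh_mul_cosh_sub_sinh_mul_sinh_mul_cos_le {a b A : ℝ} (ha : a ∈ Icc 0 A)
    (hb : b ∈ Icc 0 A) (θ : ℝ) :
    cosh a * cosh b - sinh a * sinh b * cos θ ≤ cosh (|a - b| + sinh A * |θ|) := by
  have hA : 0 ≤ sinh A := sinh_nonneg_iff.2 (ha.1.trans ha.2)
  have hsinh : 0 ≤ sinh a * sinh b := mul_nonneg (sinh_nonneg_iff.2 ha.1) (sinh_nonneg_iff.2 hb.1)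
  have hsinh_le : sinh a * sinh b ≤ sinh A ^ 2 := by
    rw [sq]
    exact mul_le_mul (sinh_le_sinh.2 ha.2) (sinh_le_sinh.2 hb.2) (sinh_nonneg_iff.2 hb.1) hA
  have hcos : 1 - cos θ ≤ θ ^ 2 / 2 := by linarith [one_sub_sq_div_two_le_cos (x := θ)]
  calc cosh a * cosh b - sinh a * sinh b * cos θ
      = cosh |a - b| + sinh a * sinh b * (1 - cos θ) := by rw [cosh_abs, cosh_sub]; ring
    _ ≤ cosh |a - b| + sinh A ^ 2 * (θ ^ 2 / 2) := by
      gcongr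
      linarith [cos_le_one θ]
    _ = cosh |a - b| + (sinh A * |θ|) ^ 2 / 2 := by rw [mul_pow, sq_abs]; ring
    _ ≤ cosh |a - b| + cosh (sinh A * |θ|) - 1 := by
      linarith [one_add_sq_div_two_le_cosh (sinh A * |θ|)]
    _ ≤ cosh (|a - b| + sinh A * |θ|) := by
      linarith [cosh_add_cosh_le (abs_nonneg (a - b)) (mul_nonneg hA (abs_nonneg θ))]

section Disc

variable {k : ℝ} {x y : Pt}

lemma sOf_pos (hk : 0 < k) : 0 < sOf k := one_div_pos.2 (Real.sqrt_pos.2 hk)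

lemma sqrt_mul_lt_one (hk : 0 < k) {R : ℝ} (hRs : R < sOf k) : √k * R < 1 := by
  rwa [sOf, lt_div_iff₀ (Real.sqrt_pos.2 hk), mul_comm] at hRs

lemma zero_mem_disc : (0 : Pt) ∈ disc k := by simp [disc]

lemma mem_disc_of_norm_le (hk : 0 < k) {R : ℝ} (hRs : R < sOf k) (hx : ‖x‖ ≤ R) :
    x ∈ disc k := by
  have h : √k * ‖x‖ < 1 :=
    (mul_le_mul_of_nonneg_left hx (Real.sqrt_nonneg k)).trans_lt (sqrt_mul_lt_one hk hRs)
  have h0 : 0 ≤ √k * ‖x‖ := by positivity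
  rw [disc, mem_ofPred_eq, ← Real.sq_sqrt hk.le, ← mul_pow]
  nlinarith

lemma norm_mAdd_neg_sq (hk : 0 ≤ k) (hx : x ∈ disc k) (hy : y ∈ disc k) :
    ‖mAdd k (-x) y‖ ^ 2 =
      ‖x - y‖ ^ 2 / ((1 - k * ‖x‖ ^ 2) * (1 - k * ‖y‖ ^ 2) + k * ‖x - y‖ ^ 2) := by
  rw [disc, mem_ofPred_eq] at hx hy
  rw [mAdd, norm_smul, mul_pow, norm_add_sq_real, norm_smul, norm_smul, inner_smul_left,
    inner_smul_right, inner_neg_left, norm_neg, norm_inv, norm_sub_sq_real]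
  simp only [Real.norm_eq_abs, mul_pow, sq_abs, inv_pow, conj_trivial]
  have hP : 0 < (1 - k * ‖x‖ ^ 2) * (1 - k * ‖y‖ ^ 2) := mul_pos (by linarith) (by linarith)
  have hD : 0 < (1 - k * ‖x‖ ^ 2) * (1 - k * ‖y‖ ^ 2) +
      k * (‖x‖ ^ 2 - 2 * ⟪x, y⟫_ℝ + ‖y‖ ^ 2) := by
    rw [← norm_sub_sq_real]; positivity
  rw [show 1 + 2 * k * -⟪x, y⟫_ℝ + k ^ 2 * ‖x‖ ^ 2 * ‖y‖ ^ 2 =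
    (1 - k * ‖x‖ ^ 2) * (1 - k * ‖y‖ ^ 2) + k * (‖x‖ ^ 2 - 2 * ⟪x, y⟫_ℝ + ‖y‖ ^ 2) by ring]
  field_simp
  ring

lemma sqrt_mul_norm_mAdd_neg_mem (hk : 0 < k) (hx : x ∈ disc k) (hy : y ∈ disc k) :
    √k * ‖mAdd k (-x) y‖ ∈ Ico 0 1 := by
  refine ⟨by positivity, ?_⟩
  have hsq : (√k * ‖mAdd k (-x) y‖) ^ 2 < 1 := by
    rw [mul_pow, Real.sq_sqrt hk.le, norm_mAdd_neg_sq hk.le hx hy, mul_div_assoc']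
    rw [disc, mem_ofPred_eq] at hx hy
    have hP : 0 < (1 - k * ‖x‖ ^ 2) * (1 - k * ‖y‖ ^ 2) := mul_pos (by linarith) (by linarith)
    rw [div_lt_one (by positivity)]
    linarith
  nlinarith [norm_nonneg (mAdd k (-x) y), Real.sqrt_nonneg k]

lemma sqrt_mul_hdist (hk : 0 < k) (hx : x ∈ disc k) (hy : y ∈ disc k) :
    √k * hdist k x y = 2 * Real.artanh (√k * ‖mAdd k (-x) y‖) := by
  have ht := sqrt_mul_norm_mAdd_neg_mem hk hx hy
  rw [hdist, HypFL.artanh, Real.artanh_eq_half_log ⟨by linarith [ht.1], ht.2.le⟩]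
  field_simp

lemma sqrt_mul_hdist_zero (hk : 0 < k) (hx : x ∈ disc k) :
    √k * hdist k 0 x = 2 * Real.artanh (√k * ‖x‖) := by
  simpa [mAdd] using sqrt_mul_hdist hk zero_mem_disc hx

lemma sqrt_mul_norm_mem (hk : 0 < k) (hx : x ∈ disc k) : √k * ‖x‖ ∈ Ico 0 1 := by
  simpa [mAdd] using sqrt_mul_norm_mAdd_neg_mem hk zero_mem_disc hx

lemma hdist_self (k : ℝ) (x : Pt) : hdist k x x = 0 := by
  have h : mAdd k (-x) x = 0 := by
    rw [mAdd, inner_neg_left, real_inner_self_eq_norm_sq, norm_neg,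
      show 1 + 2 * k * -‖x‖ ^ 2 + k * ‖x‖ ^ 2 = 1 - k * ‖x‖ ^ 2 by ring, smul_neg,
      neg_add_cancel, smul_zero]
  simp [hdist, h, HypFL.artanh]

lemma hdist_nonneg (hk : 0 < k) (hx : x ∈ disc k) (hy : y ∈ disc k) : 0 ≤ hdist k x y := by
  refine nonneg_of_mul_nonneg_right ?_ (Real.sqrt_pos.2 hk)
  rw [sqrt_mul_hdist hk hx hy]
  exact mul_nonneg zero_le_two (Real.artanh_nonneg (sqrt_mul_norm_mAdd_neg_mem hk hx hy).1)

lemma cosh_sqrt_mul_hdist (hk : 0 < k) (hx : x ∈ disc k) (hy : y ∈ disc k) :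
    cosh (√k * hdist k x y) =
      1 + 2 * k * ‖x - y‖ ^ 2 / ((1 - k * ‖x‖ ^ 2) * (1 - k * ‖y‖ ^ 2)) := by
  have ht := sqrt_mul_norm_mAdd_neg_mem hk hx hy
  rw [sqrt_mul_hdist hk hx hy, cosh_two_mul_artanh ⟨by linarith [ht.1], ht.2⟩, mul_pow,
    Real.sq_sqrt hk.le, norm_mAdd_neg_sq hk.le hx hy]
  rw [disc, mem_ofPred_eq] at hx hy
  have hP : 0 < (1 - k * ‖x‖ ^ 2) * (1 - k * ‖y‖ ^ 2) := mul_pos (by linarith) (by linarith)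
  have hD : (1 - k * ‖x‖ ^ 2) * (1 - k * ‖y‖ ^ 2) + k * ‖x - y‖ ^ 2 ≠ 0 := by positivity
  rw [mul_div_assoc', one_sub_div hD, one_add_div hD, div_div_div_cancel_right₀ hD,
    add_sub_cancel_right, add_assoc, add_div, div_self hP.ne']
  ring

lemma hdist_le_of_cosh_le (hk : 0 < k) (hx : x ∈ disc k) (hy : y ∈ disc k) {ε : ℝ}
    (hε : 0 ≤ ε) (h : cosh (√k * hdist k x y) ≤ cosh (√k * ε)) : hdist k x y ≤ ε := by
  have hsk := Real.sqrt_pos.2 hk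
  rw [cosh_le_cosh, abs_of_nonneg (mul_nonneg hsk.le (hdist_nonneg hk hx hy)),
    abs_of_nonneg (mul_nonneg hsk.le hε)] at h
  exact le_of_mul_le_mul_left h hsk

end Disc

section Polar

lemma norm_sq_eq_sq_add_sq (x : Pt) : ‖x‖ ^ 2 = x 0 ^ 2 + x 1 ^ 2 := by
  rw [EuclideanSpace.real_norm_sq_eq, Fin.sum_univ_two]

lemma norm_ptPolar_sq (r θ : ℝ) : ‖ptPolar r θ‖ ^ 2 = r ^ 2 := by
  rw [norm_sq_eq_sq_add_sq]
  simp only [ptPolar, PiLp.toLp_apply, Matrix.cons_val_zero, Matrix.cons_val_one]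
  linear_combination r ^ 2 * sin_sq_add_cos_sq θ

lemma norm_ptPolar_sub_ptPolar_sq (r₁ r₂ θ₁ θ₂ : ℝ) :
    ‖ptPolar r₁ θ₁ - ptPolar r₂ θ₂‖ ^ 2 = r₁ ^ 2 + r₂ ^ 2 - 2 * r₁ * r₂ * cos (θ₁ - θ₂) := by
  rw [norm_sq_eq_sq_add_sq, cos_sub]
  simp only [ptPolar, PiLp.sub_apply, Matrix.cons_val_zero, Matrix.cons_val_one]
  linear_combination r₁ ^ 2 * sin_sq_add_cos_sq θ₁ + r₂ ^ 2 * sin_sq_add_cos_sq θ₂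

lemma polarAngle_nonneg (x : Pt) : 0 ≤ polarAngle x := by
  have := Complex.neg_pi_lt_arg ((x 0 : ℂ) + (x 1 : ℂ) * Complex.I)
  unfold polarAngle
  split_ifs with h
  · exact h.le
  · linarith [pi_pos]

lemma ptPolar_norm_polarAngle (x : Pt) : ptPolar ‖x‖ (polarAngle x) = x := by
  set z : ℂ := (x 0 : ℂ) + (x 1 : ℂ) * Complex.I
  have hz : ‖z‖ = ‖x‖ := by
    rw [Complex.norm_add_mul_I, ← norm_sq_eq_sq_add_sq, Real.sqrt_sq (norm_nonneg x)]
  have hcos : cos (polarAngle x) = cos (Complex.arg z) := by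
    unfold polarAngle; split_ifs; exacts [rfl, cos_add_two_pi _]
  have hsin : sin (polarAngle x) = sin (Complex.arg z) := by
    unfold polarAngle; split_ifs; exacts [rfl, sin_add_two_pi _]
  ext i
  fin_cases i
  · simp [ptPolar, hcos, ← hz, Complex.norm_mul_cos_arg, z]
  · simp [ptPolar, hsin, ← hz, Complex.norm_mul_sin_arg, z]

variable {k : ℝ}

lemma sqrt_mul_eucOfHyp (hk : 0 < k) (r : ℝ) : √k * eucOfHyp k r = tanh (√k * r / 2) := by
  have hsk := Real.sqrt_pos.2 hk
  have h2 : r / sOf k = √k * r / 2 + √k * r / 2 := by rw [sOf]; field_simp; ring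
  rw [eucOfHyp, sOf, tanh_eq, ← sOf, h2, exp_add, exp_neg, sOf]
  field_simp

lemma eucOfHyp_hdist_zero (hk : 0 < k) {x : Pt} (hx : x ∈ disc k) :
    eucOfHyp k (hdist k 0 x) = ‖x‖ := by
  have ht := sqrt_mul_norm_mem hk hx
  refine mul_left_cancel₀ (Real.sqrt_pos.2 hk).ne' ?_
  rw [sqrt_mul_eucOfHyp hk, sqrt_mul_hdist_zero hk hx, mul_div_cancel_left₀ _ two_ne_zero,
    Real.tanh_artanh ⟨by linarith [ht.1], ht.2⟩]

lemma ptPolar_eucOfHyp_hdist_zero (hk : 0 < k) {x : Pt} (hx : x ∈ disc k) :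
    ptPolar (eucOfHyp k (hdist k 0 x)) (polarAngle x) = x := by
  rw [eucOfHyp_hdist_zero hk hx, ptPolar_norm_polarAngle]

lemma mul_norm_ptPolar_eucOfHyp_sq (hk : 0 < k) (r θ : ℝ) :
    k * ‖ptPolar (eucOfHyp k r) θ‖ ^ 2 = tanh (√k * r / 2) ^ 2 := by
  rw [norm_ptPolar_sq, ← sqrt_mul_eucOfHyp hk, mul_pow, Real.sq_sqrt hk.le]

lemma ptPolar_eucOfHyp_mem_disc (hk : 0 < k) (r θ : ℝ) : ptPolar (eucOfHyp k r) θ ∈ disc k := by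
  rw [disc, mem_ofPred_eq, mul_norm_ptPolar_eucOfHyp_sq hk]
  exact tanh_sq_lt_one _

lemma cosh_sqrt_mul_hdist_ptPolar (hk : 0 < k) (r₁ r₂ θ₁ θ₂ : ℝ) :
    cosh (√k * hdist k (ptPolar (eucOfHyp k r₁) θ₁) (ptPolar (eucOfHyp k r₂) θ₂)) =
      cosh (√k * r₁) * cosh (√k * r₂) - sinh (√k * r₁) * sinh (√k * r₂) * cos (θ₁ - θ₂) := by
  have huv : k * ‖ptPolar (eucOfHyp k r₁) θ₁ - ptPolar (eucOfHyp k r₂) θ₂‖ ^ 2 =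
      tanh (√k * r₁ / 2) ^ 2 + tanh (√k * r₂ / 2) ^ 2 -
        2 * tanh (√k * r₁ / 2) * tanh (√k * r₂ / 2) * cos (θ₁ - θ₂) := by
    rw [norm_ptPolar_sub_ptPolar_sq, ← sqrt_mul_eucOfHyp hk, ← sqrt_mul_eucOfHyp hk]
    ring_nf
    rw [Real.sq_sqrt hk.le]
    ring
  rw [cosh_sqrt_mul_hdist hk (ptPolar_eucOfHyp_mem_disc hk _ _)
      (ptPolar_eucOfHyp_mem_disc hk _ _),
    mul_assoc, huv, mul_norm_ptPolar_eucOfHyp_sq hk, mul_norm_ptPolar_eucOfHyp_sq hk,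
    ← mul_div_cancel₀ (√k * r₁) (two_ne_zero' ℝ), ← mul_div_cancel₀ (√k * r₂) (two_ne_zero' ℝ),
    cosh_two_mul_eq_tanh, cosh_two_mul_eq_tanh, sinh_two_mul_eq_tanh, sinh_two_mul_eq_tanh]
  have hu : 0 < 1 - tanh (√k * r₁ / 2) ^ 2 := by linarith [tanh_sq_lt_one (√k * r₁ / 2)]
  have hv : 0 < 1 - tanh (√k * r₂ / 2) ^ 2 := by linarith [tanh_sq_lt_one (√k * r₂ / 2)]
  field_simp
  ring

lemma hdist_ptPolar_le {ρ r₁ r₂ : ℝ} (hk : 0 < k) (hr₁ : r₁ ∈ Icc 0 ρ) (hr₂ : r₂ ∈ Icc 0 ρ)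
    (θ₁ θ₂ : ℝ) :
    hdist k (ptPolar (eucOfHyp k r₁) θ₁) (ptPolar (eucOfHyp k r₂) θ₂) ≤
      |r₁ - r₂| + sOf k * sinh (ρ / sOf k) * |θ₁ - θ₂| := by
  have hsk := Real.sqrt_pos.2 hk
  have hρ : ρ / sOf k = √k * ρ := by rw [sOf]; field_simp
  have hsinh : 0 ≤ sinh (ρ / sOf k) :=
    sinh_nonneg_iff.2 (div_nonneg (hr₁.1.trans hr₁.2) (sOf_pos hk).le)
  have hA (r : ℝ) (hr : r ∈ Icc 0 ρ) : √k * r ∈ Icc 0 (√k * ρ) :=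
    ⟨mul_nonneg hsk.le hr.1, mul_le_mul_of_nonneg_left hr.2 hsk.le⟩
  refine hdist_le_of_cosh_le hk (ptPolar_eucOfHyp_mem_disc hk _ _)
    (ptPolar_eucOfHyp_mem_disc hk _ _) (by have := sOf_pos hk; positivity) ?_
  rw [cosh_sqrt_mul_hdist_ptPolar hk]
  convert cosh_mul_cosh_sub_sinh_mul_sinh_mul_cos_le (hA r₁ hr₁) (hA r₂ hr₂) (θ₁ - θ₂) using 2
  rw [hρ, ← mul_sub, abs_mul, abs_of_pos hsk, sOf]
  field_simp

end Polar

lemma abs_sub_le_of_mem_Ioc {a b l u : ℝ} (ha : a ∈ Ioc l u) (hb : b ∈ Ioc l u) :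
    |a - b| ≤ u - l :=
  abs_sub_le_iff.2 ⟨by linarith [ha.2, hb.1], by linarith [ha.1, hb.2]⟩

lemma div_natCeil_div_le {a b : ℝ} (ha : 0 < a) (hb : 0 < b) : a / ⌈a / b⌉₊ ≤ b := by
  have hN : (0 : ℝ) < ⌈a / b⌉₊ := Nat.cast_pos.2 (Nat.ceil_pos.2 (div_pos ha hb))
  rw [div_le_iff₀ hN, mul_comm, ← div_le_iff₀ hb]
  exact Nat.le_ceil _

lemma abs_sub_natCeil_div_sub_half_mul_le {a h : ℝ} (ha : 0 ≤ a) (hh : 0 < h) :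
    |a - (⌈a / h⌉₊ - 1 / 2) * h| ≤ h / 2 := by
  have h₁ := (div_le_iff₀ hh).1 (Nat.le_ceil (a / h))
  have h₂ := Nat.ceil_lt_add_one (div_nonneg ha hh.le)
  rw [← sub_lt_iff_lt_add, lt_div_iff₀ hh] at h₂
  rw [abs_le]
  constructor <;> linarith

lemma natCeil_div_sub_half_mul_mem_Icc {a h : ℝ} {N : ℕ} (ha : 0 < a) (hh : 0 < h)
    (haN : a ≤ N * h) : (⌈a / h⌉₊ - 1 / 2 : ℝ) * h ∈ Icc 0 (N * h) := by
  have h₁ : (1 : ℝ) ≤ ⌈a / h⌉₊ := Nat.one_le_cast.2 (Nat.ceil_pos.2 (div_pos ha hh))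
  have h₂ : (⌈a / h⌉₊ : ℝ) ≤ N := Nat.cast_le.2 (Nat.ceil_le.2 ((div_le_iff₀ hh).2 haN))
  constructor <;> nlinarith

section Quantization

variable {k R ε : ℝ}

lemma sqrt_mul_RH (hk : 0 < k) (hR : 0 ≤ R) (hRs : R < sOf k) :
    √k * RH k R = 2 * Real.artanh (√k * R) := by
  have hsk := Real.sqrt_pos.2 hk
  have hR1 := sqrt_mul_lt_one hk hRs
  have hfrac : (sOf k + R) / (sOf k - R) = (1 + √k * R) / (1 - √k * R) := by
    rw [sOf]; field_simp
  rw [RH, hfrac, Real.artanh_eq_half_log ⟨by nlinarith, hR1.le⟩, sOf]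
  field_simp

lemma RH_pos (hk : 0 < k) (hR : 0 < R) (hRs : R < sOf k) : 0 < RH k R := by
  refine pos_of_mul_pos_right ?_ (Real.sqrt_nonneg k)
  rw [sqrt_mul_RH hk hR.le hRs]
  exact mul_pos two_pos (Real.artanh_pos ⟨by positivity, sqrt_mul_lt_one hk hRs⟩)

lemma hdist_zero_mem_Icc_RH (hk : 0 < k) (hR : 0 ≤ R) (hRs : R < sOf k) {x : Pt}
    (hx : ‖x‖ ≤ R) : hdist k 0 x ∈ Icc 0 (RH k R) := by
  have hsk := Real.sqrt_pos.2 hk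
  have hxd := mem_disc_of_norm_le hk hRs hx
  refine ⟨hdist_nonneg hk zero_mem_disc hxd, le_of_mul_le_mul_left ?_ hsk⟩
  rw [sqrt_mul_hdist_zero hk hxd, sqrt_mul_RH hk hR hRs]
  gcongr
  exact Real.artanh_le_artanh (by linarith [(sqrt_mul_norm_mem hk hxd).1])
    (sqrt_mul_lt_one hk hRs) (mul_le_mul_of_nonneg_left hx hsk.le)

lemma RH_div_NRad_le (hk : 0 < k) (hR : 0 < R) (hRs : R < sOf k) (hε : 0 < ε) :
    RH k R / NRad k R ε ≤ ε / 2 :=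
  calc RH k R / NRad k R ε = 2 * RH k R / ⌈2 * RH k R / ε⌉₊ / 2 := by rw [NRad]; ring
    _ ≤ ε / 2 := by gcongr; exact div_natCeil_div_le (mul_pos two_pos (RH_pos hk hR hRs)) hε

lemma sOf_mul_sinh_mul_angle_step_le (hk : 0 < k) (hR : 0 < R) (hRs : R < sOf k)
    (hε : 0 < ε) : sOf k * sinh (RH k R / sOf k) * (2 * π / NTheta k R ε) ≤ ε / 2 := by
  have hs := sOf_pos hk
  have hsinh : 0 < sinh (RH k R / sOf k) := sinh_pos_iff.2 (div_pos (RH_pos hk hR hRs) hs)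
  set c := 4 * π * sOf k * sinh (RH k R / sOf k) with hc
  calc sOf k * sinh (RH k R / sOf k) * (2 * π / NTheta k R ε) = c / ⌈c / ε⌉₊ / 2 := by
        rw [NTheta, hc]; ring
    _ ≤ ε / 2 := by gcongr; exact div_natCeil_div_le (by positivity) hε

lemma hdist_ptPolar_le_of_abs_sub_le (hk : 0 < k) (hR : 0 < R) (hRs : R < sOf k)
    (hε : 0 < ε) {r₁ r₂ θ₁ θ₂ : ℝ} (hr₁ : r₁ ∈ Icc 0 (RH k R)) (hr₂ : r₂ ∈ Icc 0 (RH k R))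
    (hr : |r₁ - r₂| ≤ RH k R / NRad k R ε) (hθ : |θ₁ - θ₂| ≤ 2 * π / NTheta k R ε) :
    hdist k (ptPolar (eucOfHyp k r₁) θ₁) (ptPolar (eucOfHyp k r₂) θ₂) ≤ ε := by
  have hC : 0 ≤ sOf k * sinh (RH k R / sOf k) := mul_nonneg (sOf_pos hk).le
    (sinh_nonneg_iff.2 (div_nonneg (hr₁.1.trans hr₁.2) (sOf_pos hk).le))
  calc hdist k (ptPolar (eucOfHyp k r₁) θ₁) (ptPolar (eucOfHyp k r₂) θ₂)
      ≤ |r₁ - r₂| + sOf k * sinh (RH k R / sOf k) * |θ₁ - θ₂| :=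
        hdist_ptPolar_le hk hr₁ hr₂ θ₁ θ₂
    _ ≤ ε / 2 + ε / 2 := by
      gcongr
      · exact hr.trans (RH_div_NRad_le hk hR hRs hε)
      · exact (mul_le_mul_of_nonneg_left hθ hC).trans
          (sOf_mul_sinh_mul_angle_step_le hk hR hRs hε)
    _ = ε := add_halves ε

lemma hdist_le_of_mem_qbin (hk : 0 < k) (hR : 0 < R) (hRs : R < sOf k) (hε : 0 < ε)
    {n₁ n₂ : ℕ} {x y : Pt} (hx : ‖x‖ ≤ R) (hy : ‖y‖ ≤ R) (hxb : x ∈ qbin k R ε n₁ n₂)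
    (hyb : y ∈ qbin k R ε n₁ n₂) : hdist k x y ≤ ε := by
  rw [← ptPolar_eucOfHyp_hdist_zero hk (mem_disc_of_norm_le hk hRs hx),
    ← ptPolar_eucOfHyp_hdist_zero hk (mem_disc_of_norm_le hk hRs hy)]
  refine hdist_ptPolar_le_of_abs_sub_le hk hR hRs hε (hdist_zero_mem_Icc_RH hk hR.le hRs hx)
    (hdist_zero_mem_Icc_RH hk hR.le hRs hy) ?_ ?_
  · exact (abs_sub_le_of_mem_Ioc hxb.2 hyb.2).trans_eq (by ring)
  · exact (abs_sub_le_of_mem_Ioc hxb.1 hyb.1).trans_eq (by ring)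

lemma hdist_PQ_le (hk : 0 < k) (hR : 0 < R) (hRs : R < sOf k) (hε : 0 < ε) {x : Pt}
    (hx : ‖x‖ ≤ R) : hdist k x (PQ k R ε x) ≤ ε := by
  rcases eq_or_ne x 0 with rfl | hx0
  · simpa [PQ, hdist_self] using hε.le
  have hxd := mem_disc_of_norm_le hk hRs hx
  have hr := hdist_zero_mem_Icc_RH hk hR.le hRs hx
  have hr0 : 0 < hdist k 0 x := hr.1.lt_of_ne fun h ↦ hx0 <| norm_eq_zero.1 <| by
    rw [← eucOfHyp_hdist_zero hk hxd, ← h, eucOfHyp]; simp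
  have hN : (0 : ℝ) < NRad k R ε :=
    Nat.cast_pos.2 (Nat.ceil_pos.2 (div_pos (mul_pos two_pos (RH_pos hk hR hRs)) hε))
  have hΔ : 0 < RH k R / NRad k R ε := div_pos (RH_pos hk hR hRs) hN
  have hT : 0 < 2 * π / NTheta k R ε := by
    have hs := sOf_pos hk
    have := sinh_pos_iff.2 (div_pos (RH_pos hk hR hRs) hs)
    exact div_pos (by positivity) (Nat.cast_pos.2 (Nat.ceil_pos.2 (by positivity)))
  rw [PQ, if_neg hx0]
  nth_rewrite 1 [← ptPolar_eucOfHyp_hdist_zero hk hxd]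
  refine hdist_ptPolar_le_of_abs_sub_le hk hR hRs hε hr ?_ ?_ ?_
  · simpa only [mul_div_cancel₀ _ hN.ne'] using
      natCeil_div_sub_half_mul_mem_Icc hr0 hΔ (N := NRad k R ε)
        (by rw [mul_div_cancel₀ _ hN.ne']; exact hr.2)
  · exact (abs_sub_natCeil_div_sub_half_mul_le hr.1 hΔ).trans (half_le_self hΔ.le)
  · exact (abs_sub_natCeil_div_sub_half_mul_le (polarAngle_nonneg x) hT).trans
      (half_le_self hT.le)

end Quantization

/-- For every `ε > 0`, any two points of the closed disc of Euclidean
radius `R` lying in the same quantization bin `B(n₁, n₂)` are at hyperbolic distance at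
most `ε` — so `PQ_ε` is an `ε`-Poincaré quantization scheme — and moreover
`d(x, PQ_ε(x)) ≤ ε` for every such point `x`. -/
theorem pq_is_eps_quantization (k R ε : ℝ) (hk : 0 < k) (hR : 0 < R) (hRs : R < sOf k)
    (hε : 0 < ε) :
    (∀ n₁ ∈ Finset.Icc 1 (NTheta k R ε), ∀ n₂ ∈ Finset.Icc 1 (NRad k R ε),
      ∀ x ∈ Metric.closedBall (0 : Pt) R, ∀ y ∈ Metric.closedBall (0 : Pt) R,
        x ∈ qbin k R ε n₁ n₂ → y ∈ qbin k R ε n₁ n₂ → hdist k x y ≤ ε) ∧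
    (∀ x ∈ Metric.closedBall (0 : Pt) R, hdist k x (PQ k R ε x) ≤ ε) := by
  refine ⟨fun _ _ _ _ x hx y hy hxb hyb ↦ ?_, fun x hx ↦ ?_⟩
  · exact hdist_le_of_mem_qbin hk hR hRs hε (mem_closedBall_zero_iff.1 hx)
      (mem_closedBall_zero_iff.1 hy) hxb hyb
  · exact hdist_PQ_le hk hR hRs hε (mem_closedBall_zero_iff.1 hx)

end HypFL
end
end

section
/- Let 0 ≤ a₁ < a₂ < … < a_m (m ≥ 2) be a B_h sequence and define a′_i = a_{i+1} − a₁ for i ∈ {1,…,m−1}. Then for any multisets S and T of indices from {1,…,m−1} with 1 ≤ |S| ≤ h and 1 ≤ |T| ≤ h, the equality Σ_{i∈S} a′_i = Σ_{i∈T} a′_i implies S = T as multisets (in particular |S| = |T|). Consequently, a′_1 < … < a′_{m−1} is again a B_h sequence, and moreover all its sums of at most h elements (with repetition) are pairwise distinct, even across different numbers of summands. -/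
namespace BhSeq

/-- `a : Fin m → ℕ` (strictly increasing) is a `B_h` sequence if any two multisets of `h`
indices with equal sums of corresponding terms are equal: sums of `h` terms of the
sequence, with repetition allowed, uniquely determine the summands. -/
def IsBhSeq (h : ℕ) {m : ℕ} (a : Fin m → ℕ) : Prop :=
  StrictMono a ∧
    ∀ S T : Multiset (Fin m), Multiset.card S = h → Multiset.card T = h →
      (S.map a).sum = (T.map a).sum → S = T

end BhSeq

namespace BhSeq

/-- If `0 ≤ a₁ < … < a_m` (`m ≥ 2`) is a `B_h` sequence and
`a′_i = a_{i+1} − a₁` for `i ∈ {1, …, m−1}`, then `a′` is strictly increasing (hence again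
a `B_h` sequence) and any two multisets of at most `h` indices (each nonempty, possibly of
different sizes) with equal `a′`-sums are equal: all sums of at most `h` elements of `a′`,
with repetition, are pairwise distinct even across different numbers of summands. -/
theorem bh_shifted (h m : ℕ) (hh : 1 ≤ h) (hm : 2 ≤ m) (a : Fin m → ℕ)
    (ha : IsBhSeq h a) (a' : Fin (m - 1) → ℕ)
    (ha' : ∀ i : Fin (m - 1), a' i = a ⟨i.1 + 1, by have := i.isLt; omega⟩ - a ⟨0, by omega⟩) :
    StrictMono a' ∧
    ∀ S T : Multiset (Fin (m - 1)), 1 ≤ Multiset.card S → Multiset.card S ≤ h →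
      1 ≤ Multiset.card T → Multiset.card T ≤ h →
      (S.map a').sum = (T.map a').sum → S = T := by
  obtain ⟨hmono, hbh⟩ := ha
  have h0 : (0 : ℕ) < m := by omega
  set z : Fin m := ⟨0, h0⟩ with hz
  set f : Fin (m - 1) → Fin m := fun i => ⟨i.1 + 1, by have := i.isLt; omega⟩ with hfdef
  have hle : ∀ i : Fin (m - 1), a z ≤ a (f i) := by
    intro i
    exact le_of_lt (hmono (by simp [hz, hfdef, Fin.lt_def]))
  have hfi : Function.Injective f := by
    intro i j hij
    have : i.1 + 1 = j.1 + 1 := congrArg Fin.val hij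
    exact Fin.ext (by omega)
  have hfz : ∀ i : Fin (m - 1), f i ≠ z := by
    intro i hiz
    have : i.1 + 1 = 0 := congrArg Fin.val hiz
    omega
  have key : ∀ i : Fin (m - 1), a' i + a z = a (f i) := by
    intro i
    rw [ha' i]
    have := hle i
    simp only [hfdef] at this ⊢
    omega
  constructor
  · intro i j hij
    have h1 := key i
    have h2 := key j
    have hij' : i.1 < j.1 := hij
    have h3 : a (f i) < a (f j) := hmono (show (f i).1 < (f j).1 from by
      show i.1 + 1 < j.1 + 1; omega)
    omega
  · intro S T hS1 hSh hT1 hTh hsum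
    have hsumlem : ∀ U : Multiset (Fin (m - 1)),
        ((U.map f).map a).sum = (U.map a').sum + Multiset.card U * a z := by
      intro U
      induction U using Multiset.induction_on with
      | empty => simp
      | cons x s ih =>
        simp only [Multiset.map_cons, Multiset.sum_cons, Multiset.card_cons, ih]
        have := key x
        ring_nf
        omega
    set S' : Multiset (Fin m) := S.map f + Multiset.replicate (h - Multiset.card S) z with hS'
    set T' : Multiset (Fin m) := T.map f + Multiset.replicate (h - Multiset.card T) z with hT'
    have hcS : Multiset.card S' = h := by
      simp [hS', Multiset.card_replicate]; omega
    have hcT : Multiset.card T' = h := by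
      simp [hT', Multiset.card_replicate]; omega
    have hsum' : (S'.map a).sum = (T'.map a).sum := by
      simp only [hS', hT', Multiset.map_add, Multiset.sum_add, Multiset.map_replicate,
        Multiset.sum_replicate, smul_eq_mul, hsumlem, hsum]
      have h1 : Multiset.card S * a z + (h - Multiset.card S) * a z = h * a z := by
        rw [← Nat.add_mul]; congr 1; omega
      have h2 : Multiset.card T * a z + (h - Multiset.card T) * a z = h * a z := by
        rw [← Nat.add_mul]; congr 1; omega
      omega
    have hST' : S' = T' := hbh S' T' hcS hcT hsum'
    have hcount0 : ∀ U : Multiset (Fin (m - 1)), Multiset.count z (U.map f) = 0 := by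
      intro U
      rw [Multiset.count_eq_zero]
      intro hmem
      obtain ⟨i, _, hiz⟩ := Multiset.mem_map.mp hmem
      exact hfz i hiz
    have hcards : Multiset.card S = Multiset.card T := by
      have := congrArg (Multiset.count z) hST'
      simp only [hS', hT', Multiset.count_add, hcount0, Multiset.count_replicate_self,
        zero_add] at this
      omega
    have hmapeq : S.map f = T.map f := by
      rw [hS', hT', hcards] at hST'
      exact add_right_cancel hST'
    exact Multiset.map_injective hfi hmapeq

end BhSeq
end

section
/- (Bose–Chowla construction.) Let q be a prime power, let h ≥ 2 be an integer, let F = 𝔽_q be regarded as a subfield of K = 𝔽_{q^h}, and let β ∈ K be a generator of the cyclic multiplicative group K^× (a primitive element). Then β + α ≠ 0 for every α ∈ F, so for each α ∈ F there is a unique integer a(α) ∈ {0, 1, …, q^h − 2} with β^{a(α)} = β + α. For any multisets S and T of elements of F with |S| = |T| = h, the equality Σ_{α∈S} a(α) = Σ_{α∈T} a(α) (as integers) implies S = T. In particular, the q distinct integers {a(α) : α ∈ F}, listed in increasing order, form a B_h sequence whose largest element is at most q^h − 2. -/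
namespace BhSeq

open Polynomial IntermediateField

private lemma prod_map_pow_aux {K F : Type} [CommMonoid K] (β : K) (a : F → ℕ)
    (S : Multiset F) : (S.map fun α => β ^ a α).prod = β ^ (S.map a).sum := by
  induction S using Multiset.induction with
  | empty => simp
  | cons x s ih => simp [ih, pow_add]

/-- Bose–Chowla construction. Let `q` be a prime power, `h ≥ 2`,
`F = 𝔽_q ⊆ K = 𝔽_{q^h}`, and let `β` be a generator of the multiplicative group `Kˣ`.
Then `β + α ≠ 0` for every `α ∈ F`, there is a unique `a(α) ∈ {0, …, q^h − 2}` with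
`β^{a(α)} = β + α`, and for any two multisets `S, T` of elements of `F` of size `h`,
equality of the integer sums `Σ_{α∈S} a(α) = Σ_{α∈T} a(α)` forces `S = T`; in particular
`a` is injective, so the `q` distinct integers `{a(α)}`, listed in increasing order, form
a `B_h` sequence with largest element at most `q^h − 2`. -/
theorem bose_chowla (q h : ℕ) (hq : ∃ p n : ℕ, p.Prime ∧ 0 < n ∧ q = p ^ n) (hh : 2 ≤ h)
    (F K : Type) [Field F] [Field K] [Fintype F] [Fintype K] [Algebra F K]
    (hcF : Fintype.card F = q) (hcK : Fintype.card K = q ^ h)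
    (β : K) (hβ : ∀ x : K, x ≠ 0 → ∃ n : ℕ, β ^ n = x) :
    (∀ α : F, β + algebraMap F K α ≠ 0) ∧
    (∀ α : F, ∃! n : ℕ, n ≤ q ^ h - 2 ∧ β ^ n = β + algebraMap F K α) ∧
    (∀ a : F → ℕ, (∀ α : F, a α ≤ q ^ h - 2) →
      (∀ α : F, β ^ a α = β + algebraMap F K α) →
      Function.Injective a ∧
        ∀ S T : Multiset F, Multiset.card S = h → Multiset.card T = h →
          (S.map a).sum = (T.map a).sum → S = T) := by
  classical
  have hq2 : 2 ≤ q := by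
    obtain ⟨p, n, hp, hn, rfl⟩ := hq
    calc 2 ≤ p := hp.two_le
    _ = p ^ 1 := (pow_one p).symm
    _ ≤ p ^ n := Nat.pow_le_pow_right hp.pos hn
  have hqh4 : 4 ≤ q ^ h := by
    calc (4 : ℕ) = 2 ^ 2 := rfl
    _ ≤ q ^ 2 := Nat.pow_le_pow_left hq2 2
    _ ≤ q ^ h := Nat.pow_le_pow_right (by omega) hh
  have hqlt : q < q ^ h := by
    calc q = q ^ 1 := (pow_one q).symm
    _ < q ^ h := Nat.pow_lt_pow_right hq2 (by omega)
  -- β ≠ 0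
  have hβ0 : β ≠ 0 := by
    intro h0
    have hall : ∀ x : K, x = 0 ∨ x = 1 := by
      intro x
      rcases eq_or_ne x 0 with hx | hx
      · exact Or.inl hx
      · obtain ⟨n, hn⟩ := hβ x hx
        rcases Nat.eq_zero_or_pos n with rfl | hpos
        · right; simpa using hn.symm
        · rw [h0, zero_pow hpos.ne'] at hn; exact Or.inl hn.symm
    have hsub : (Finset.univ : Finset K) ⊆ {0, 1} := by
      intro x _
      rcases hall x with h | h <;> simp [h]
    have hc : Fintype.card K ≤ 2 := by
      calc Fintype.card K = (Finset.univ : Finset K).card := rfl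
      _ ≤ ({0, 1} : Finset K).card := Finset.card_le_card hsub
      _ ≤ 2 := (Finset.card_insert_le _ _).trans (by simp)
    rw [hcK] at hc; omega
  -- β generates Kˣ, so its order is q^h - 1
  set u : Kˣ := Units.mk0 β hβ0 with hu
  have hugen : ∀ v : Kˣ, v ∈ Subgroup.zpowers u := by
    intro v
    obtain ⟨n, hn⟩ := hβ v v.ne_zero
    refine Subgroup.mem_zpowers_iff.mpr ⟨(n : ℤ), Units.ext ?_⟩
    rw [zpow_natCast]
    simp only [Units.val_pow_eq_pow_val, hu, Units.val_mk0]
    exact hn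
  have hordu : orderOf u = q ^ h - 1 := by
    rw [orderOf_eq_card_of_forall_mem_zpowers hugen, Nat.card_units,
      Nat.card_eq_fintype_card, hcK]
  have hord : orderOf β = q ^ h - 1 := by
    rw [show β = (u : K) from rfl, orderOf_units, hordu]
  -- Part 1
  have hne : ∀ α : F, β + algebraMap F K α ≠ 0 := by
    intro α h0
    have hβeq : β = algebraMap F K (-α) := by
      rw [map_neg]; exact eq_neg_of_add_eq_zero_left h0
    have hα : (-α : F) ≠ 0 := by
      intro hz; rw [hz, map_zero] at hβeq; exact hβ0 hβeq
    have h1 : β ^ (q - 1) = 1 := by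
      have h2 := FiniteField.pow_card_sub_one_eq_one (-α) hα
      rw [hcF] at h2
      rw [hβeq, ← map_pow, h2, map_one]
    have hdvd := orderOf_dvd_of_pow_eq_one h1
    rw [hord] at hdvd
    have := Nat.le_of_dvd (by omega) hdvd
    omega
  -- Part 2
  have hord_pos : 0 < q ^ h - 1 := by omega
  have hkey : ∀ m₁ m₂ : ℕ, m₁ ≤ q ^ h - 2 → m₂ ≤ q ^ h - 2 → β ^ m₁ = β ^ m₂ → m₁ = m₂ := by
    intro m₁ m₂ h1 h2 heq
    have hueq : u ^ m₁ = u ^ m₂ := Units.ext (by simpa [hu] using heq)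
    have hmod := pow_eq_pow_iff_modEq.mp hueq
    rw [hordu] at hmod
    rwa [Nat.ModEq, Nat.mod_eq_of_lt (by omega), Nat.mod_eq_of_lt (by omega)] at hmod
  have hexu : ∀ α : F, ∃! n : ℕ, n ≤ q ^ h - 2 ∧ β ^ n = β + algebraMap F K α := by
    intro α
    obtain ⟨n, hn⟩ := hβ _ (hne α)
    have hmlt := Nat.mod_lt n hord_pos
    refine ⟨n % (q ^ h - 1), ⟨by omega, ?_⟩, ?_⟩
    · rw [← hord, pow_mod_orderOf, hn]
    · rintro m ⟨hm1, hm2⟩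
      refine hkey m _ hm1 (by omega) ?_
      rw [hm2, ← hord, pow_mod_orderOf, hn]
  refine ⟨hne, hexu, ?_⟩
  intro a habd haeq
  -- algebraic facts: β has degree h over F
  have hfd : FiniteDimensional F K := Module.Finite.of_finite
  have hrank : Module.finrank F K = h := by
    have hcard := Module.card_eq_pow_finrank (K := F) (V := K)
    rw [hcF, hcK] at hcard
    exact (Nat.pow_right_injective hq2 hcard.symm)
  have hint : IsIntegral F β := IsIntegral.of_finite F β
  have htop : F⟮β⟯ = ⊤ := by
    rw [eq_top_iff]
    rintro x -
    rcases eq_or_ne x 0 with rfl | hx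
    · exact zero_mem _
    · obtain ⟨n, rfl⟩ := hβ x hx
      exact pow_mem (mem_adjoin_simple_self F β) n
  have hdeg : (minpoly F β).natDegree = h := by
    have h1 := IntermediateField.adjoin.finrank hint
    rw [htop, IntermediateField.finrank_top', hrank] at h1
    exact h1.symm
  constructor
  · intro x y hxy
    have hxy2 : β + algebraMap F K x = β + algebraMap F K y := by
      rw [← haeq x, ← haeq y, hxy]
    exact (algebraMap F K).injective (add_left_cancel hxy2)
  · intro S T hS hT hsum
    set f : F[X] := ((S.map fun α : F => -α).map fun r => X - C r).prod with hfdef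
    set g : F[X] := ((T.map fun α : F => -α).map fun r => X - C r).prod with hgdef
    have hfval : ∀ U : Multiset F,
        Polynomial.aeval β (((U.map fun α : F => -α).map fun r => X - C r).prod)
          = β ^ (U.map a).sum := by
      intro U
      rw [map_multiset_prod, Multiset.map_map, Multiset.map_map]
      have hcong : ∀ φ : F → K, (∀ α : F, φ α = β ^ a α) →
          (U.map φ).prod = β ^ (U.map a).sum := by
        intro φ hφ
        rw [Multiset.map_congr rfl fun α _ => hφ α]
        exact prod_map_pow_aux β a U
      refine hcong _ fun α => ?_
      simp only [Function.comp_apply, map_neg, sub_neg_eq_add, map_add, map_sub,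
        aeval_X, aeval_C]
      exact (haeq α).symm
    have hmonic : ∀ U : Multiset F,
        (((U.map fun α : F => -α).map fun r => X - C r).prod).Monic :=
      fun U => monic_multiset_prod_of_monic _ _ fun r _ => monic_X_sub_C r
    have hdegf : ∀ U : Multiset F, Multiset.card U = h →
        (((U.map fun α : F => -α).map fun r => X - C r).prod).natDegree = h := by
      intro U hU
      rw [natDegree_multiset_prod_X_sub_C_eq_card, Multiset.card_map, hU]
    have hfg : f = g := by
      by_contra hne'
      have hsubne : f - g ≠ 0 := sub_ne_zero.mpr hne'
      have h0 : Polynomial.aeval β (f - g) = 0 := by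
        rw [map_sub, hfdef, hgdef, hfval S, hfval T, hsum, sub_self]
      have hlt : (f - g).degree < f.degree := by
        refine degree_sub_lt ?_ (hmonic S).ne_zero ?_
        · rw [hfdef, hgdef, degree_eq_natDegree (hmonic S).ne_zero,
            degree_eq_natDegree (hmonic T).ne_zero, hdegf S hS, hdegf T hT]
        · rw [hfdef, hgdef, (hmonic S).leadingCoeff, (hmonic T).leadingCoeff]
      have hmin := minpoly.degree_le_of_ne_zero F β hsubne h0
      rw [degree_eq_natDegree (minpoly.ne_zero hint), hdeg] at hmin
      rw [hfdef, degree_eq_natDegree (hmonic S).ne_zero, hdegf S hS] at hlt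
      exact absurd (hmin.trans_lt hlt) (lt_irrefl _)
    have hroots : S.map (fun α : F => -α) = T.map (fun α : F => -α) := by
      rw [← roots_multiset_prod_X_sub_C (S.map fun α : F => -α),
        ← roots_multiset_prod_X_sub_C (T.map fun α : F => -α), ← hfdef, ← hgdef, hfg]
    exact Multiset.map_injective neg_injective hroots

end BhSeq
end
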